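/- Let A, B be self-adjoint matrices on a finite-dimensional Hilbert space with 0 ≤ A, B ≤ 1, and let S: [0,1] → ℝ be continuously differentiable on (0,1) with S' strictly decreasing. Then the relative entropy admits the integral representation H(A,B) = ∫₀¹ tr |S'(B) - S'(λ)| (1(A ≥ λ) - 1(B ≥ λ))² dλ, where H(A,B) = -tr(S(A) - S(B) - S'(B)(A-B)). -/

import Mathlib

/-!
In the eigenbases `(bⱼ, vⱼ)` of `B` and `(aᵢ, uᵢ)` of `A`, the trace of `f(B) g(A)` is
`∑ⱼ ∑ᵢ |⟪vⱼ, uᵢ⟫|² f(bⱼ) g(aᵢ)`. After expanding the square both sides are sums of this shape, so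
the theorem reduces to the scalar identity
`∫₀¹ |S'(b) - S'(λ)| (1(a ≥ λ) - 1(b ≥ λ))² dλ = -(S(a) - S(b) - S'(b)(a - b))` for `a, b ∈ [0, 1]`.
The square is the indicator of the interval between `a` and `b`, on which `S'(λ) - S'(b)` has
constant sign since `S'` is decreasing; so the integral is `∫_b^a (S'(b) - S'(λ)) dλ`, and the
fundamental theorem of calculus finishes the proof.
-/
noncomputable section
open MeasureTheory
open scoped ComplexOrder

/-- Functional calculus of a Hermitian matrix through its eigendecomposition. -/
def herCFC {n : ℕ} {A : Matrix (Fin n) (Fin n) ℂ} (hA : A.IsHermitian) (g : ℝ → ℝ) :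
    Matrix (Fin n) (Fin n) ℂ :=
  (hA.eigenvectorUnitary : Matrix (Fin n) (Fin n) ℂ) *
    Matrix.diagonal (fun i => (g (hA.eigenvalues i) : ℂ)) *
    star (hA.eigenvectorUnitary : Matrix (Fin n) (Fin n) ℂ)

/-- The spectral projection `1(A ≥ λ)` of a Hermitian matrix `A`. -/
def specProj {n : ℕ} {A : Matrix (Fin n) (Fin n) ℂ} (hA : A.IsHermitian) (lam : ℝ) :
    Matrix (Fin n) (Fin n) ℂ :=
  herCFC hA (fun x => if lam ≤ x then 1 else 0)

open Set intervalIntegral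
open scoped Interval

section Scalar

variable {S S' : ℝ → ℝ}

lemma mul_sq_ite_le_sub_ite_le_eq_indicator (f : ℝ → ℝ) (a b : ℝ) :
    (fun x => f x * ((if x ≤ a then (1 : ℝ) else 0) - if x ≤ b then 1 else 0) ^ 2) =
      (Ι a b).indicator f := by
  ext x
  simp only [indicator, mem_uIoc]
  split_ifs <;> grind

lemma integral_uIoc_abs_sub_eq {a b : ℝ} (hS' : AntitoneOn S' (uIcc a b)) :
    ∫ x in Ι a b, |S' b - S' x| = ∫ x in b..a, (S' b - S' x) := by
  rcases le_total b a with hba | hab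
  · rw [uIoc_of_ge hba, integral_of_le hba]
    refine setIntegral_congr_fun measurableSet_Ioc fun x hx => abs_of_nonneg ?_
    rw [uIcc_of_ge hba] at hS'
    exact sub_nonneg.2 (hS' ⟨le_rfl, hba⟩ ⟨hx.1.le, hx.2⟩ hx.1.le)
  · rw [uIoc_of_le hab, integral_symm, integral_of_le hab, ← MeasureTheory.integral_neg]
    refine setIntegral_congr_fun measurableSet_Ioc fun x hx => ?_
    rw [uIcc_of_le hab] at hS'
    rw [neg_sub, abs_sub_comm]
    exact abs_of_nonneg (sub_nonneg.2 (hS' ⟨hx.1.le, hx.2⟩ ⟨hab, le_rfl⟩ hx.2))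

lemma integral_deriv_sub_deriv_eq {a b : ℝ} (hS : ContinuousOn S (uIcc a b))
    (hderiv : ∀ x ∈ Ioo (min a b) (max a b), HasDerivAt S (S' x) x)
    (hint : IntervalIntegrable S' volume b a) :
    ∫ x in b..a, (S' b - S' x) = -(S a - S b - S' b * (a - b)) := by
  rw [integral_eq_sub_of_hasDeriv_right (f := fun x => S' b * x - S x)]
  · ring
  · exact (continuousOn_const.mul continuousOn_id).sub (uIcc_comm a b ▸ hS)
  · intro x hx
    rw [min_comm, max_comm] at hx
    exact (((hasDerivAt_id x).const_mul (S' b)).sub (hderiv x hx)).hasDerivWithinAt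
      |>.congr_deriv (by simp)
  · exact intervalIntegrable_const.sub hint

lemma intervalIntegrable_abs_sub_mul_sq_ite (hS' : AntitoneOn S' (Icc 0 1)) (a b : ℝ) :
    IntervalIntegrable
      (fun x => |S' b - S' x| * ((if x ≤ a then (1 : ℝ) else 0) - if x ≤ b then 1 else 0) ^ 2)
      volume 0 1 := by
  have hint : IntervalIntegrable (fun x => |S' b - S' x|) volume 0 1 :=
    (intervalIntegrable_const.sub
      (hS'.mono (uIcc_of_le zero_le_one).subset).intervalIntegrable).abs
  rw [mul_sq_ite_le_sub_ite_le_eq_indicator, intervalIntegrable_iff] at *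
  exact hint.indicator measurableSet_uIoc

lemma integral_abs_sub_mul_sq_ite (hS : ContinuousOn S (Icc 0 1))
    (hderiv : ∀ x ∈ Ioo (0 : ℝ) 1, HasDerivAt S (S' x) x) (hS' : AntitoneOn S' (Icc 0 1))
    {a b : ℝ} (ha : a ∈ Icc (0 : ℝ) 1) (hb : b ∈ Icc (0 : ℝ) 1) :
    ∫ x in (0 : ℝ)..1,
        |S' b - S' x| * ((if x ≤ a then (1 : ℝ) else 0) - if x ≤ b then 1 else 0) ^ 2 =
      -(S a - S b - S' b * (a - b)) := by
  have hsub : uIcc a b ⊆ Icc 0 1 := uIcc_subset_Icc ha hb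
  have hIoc : Ι a b ⊆ Ioc 0 1 := Ioc_subset_Ioc (le_min ha.1 hb.1) (max_le ha.2 hb.2)
  calc _ = ∫ x in Ι a b, |S' b - S' x| := by
        rw [mul_sq_ite_le_sub_ite_le_eq_indicator, integral_of_le zero_le_one,
          setIntegral_indicator measurableSet_uIoc, inter_eq_right.2 hIoc]
    _ = ∫ x in b..a, (S' b - S' x) := integral_uIoc_abs_sub_eq (hS'.mono hsub)
    _ = _ := integral_deriv_sub_deriv_eq (hS.mono hsub)
        (fun x hx => hderiv x (Ioo_subset_Ioo (le_min ha.1 hb.1) (max_le ha.2 hb.2) hx))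
        ((hS'.mono (uIcc_comm a b ▸ hsub)).intervalIntegrable)

end Scalar

section Spectral

open Matrix

variable {n : ℕ} {A B : Matrix (Fin n) (Fin n) ℂ}

lemma herCFC_mul (hA : A.IsHermitian) (f g : ℝ → ℝ) :
    herCFC hA f * herCFC hA g = herCFC hA (fun x => f x * g x) := by
  have hU : star (hA.eigenvectorUnitary : Matrix (Fin n) (Fin n) ℂ) * hA.eigenvectorUnitary = 1 :=
    mem_unitaryGroup_iff'.mp hA.eigenvectorUnitary.2
  simp only [herCFC, Matrix.mul_assoc]
  rw [← Matrix.mul_assoc (star _), hU, Matrix.one_mul, ← Matrix.mul_assoc (diagonal _),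
    diagonal_mul_diagonal]
  push_cast
  rfl

lemma herCFC_one (hA : A.IsHermitian) : herCFC hA (fun _ => 1) = 1 := by
  simp [herCFC, mem_unitaryGroup_iff.mp hA.eigenvectorUnitary.2]

lemma herCFC_id (hA : A.IsHermitian) : herCFC hA (fun x => x) = A := by
  conv_rhs => rw [hA.spectral_theorem, Unitary.conjStarAlgAut_apply]
  rfl

lemma Matrix.IsHermitian.eigenvalues_mem_Icc (hA : A.IsHermitian) (hA0 : A.PosSemidef)
    (hA1 : (1 - A).PosSemidef) (i : Fin n) : hA.eigenvalues i ∈ Icc (0 : ℝ) 1 := by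
  refine ⟨hA0.eigenvalues_nonneg i, ?_⟩
  set v := hA.eigenvectorBasis i
  have hv : star ⇑v ⬝ᵥ ⇑v = 1 := by
    rw [dotProduct_comm, ← EuclideanSpace.inner_eq_star_dotProduct, inner_self_eq_norm_sq_to_K,
      hA.eigenvectorBasis.orthonormal.1 i]
    simp
  have := (Complex.nonneg_iff.1 (hA1.dotProduct_mulVec_nonneg v)).1
  rw [sub_mulVec, one_mulVec, dotProduct_sub, hv, Complex.sub_re, Complex.one_re,
    ← RCLike.re_eq_complex_re, ← hA.eigenvalues_eq] at this
  linarith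

/-- The weighted sum `∑ⱼ ∑ᵢ |⟪vⱼ, uᵢ⟫|² φ(bⱼ, aᵢ)` over eigenpairs `(bⱼ, vⱼ)` of `B` and
`(aᵢ, uᵢ)` of `A`. -/
def spectralPairing (hA : A.IsHermitian) (hB : B.IsHermitian) (φ : ℝ → ℝ → ℝ) : ℝ :=
  ∑ j, ∑ i, Complex.normSq ((star (hB.eigenvectorUnitary : Matrix (Fin n) (Fin n) ℂ) *
    (hA.eigenvectorUnitary : Matrix (Fin n) (Fin n) ℂ)) j i) *
    φ (hB.eigenvalues j) (hA.eigenvalues i)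

variable (hA : A.IsHermitian) (hB : B.IsHermitian)

lemma spectralPairing_add (φ ψ : ℝ → ℝ → ℝ) :
    spectralPairing hA hB φ + spectralPairing hA hB ψ =
      spectralPairing hA hB (fun b a => φ b a + ψ b a) := by
  simp only [spectralPairing, mul_add, Finset.sum_add_distrib]

lemma spectralPairing_sub (φ ψ : ℝ → ℝ → ℝ) :
    spectralPairing hA hB φ - spectralPairing hA hB ψ =
      spectralPairing hA hB (fun b a => φ b a - ψ b a) := by
  simp only [spectralPairing, mul_sub, Finset.sum_sub_distrib]

lemma re_trace_herCFC_mul_herCFC (f g : ℝ → ℝ) :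
    (herCFC hB f * herCFC hA g).trace.re = spectralPairing hA hB (fun b a => f b * g a) := by
  set C := star (hB.eigenvectorUnitary : Matrix (Fin n) (Fin n) ℂ) *
    (hA.eigenvectorUnitary : Matrix (Fin n) (Fin n) ℂ)
  have hC : (herCFC hB f * herCFC hA g).trace = (diagonal (fun j => (f (hB.eigenvalues j) : ℂ)) *
      C * diagonal (fun i => (g (hA.eigenvalues i) : ℂ)) * star C).trace := by
    simp only [herCFC, C, star_mul, star_star, Matrix.mul_assoc]
    rw [trace_mul_comm]
    simp only [Matrix.mul_assoc]
  rw [hC, spectralPairing]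
  simp only [trace, diag_apply, Matrix.mul_apply (M := _ * Matrix.diagonal _),
    Matrix.mul_diagonal, Matrix.diagonal_mul, star_apply, RCLike.star_def, Complex.re_sum]
  refine Finset.sum_congr rfl fun j _ => Finset.sum_congr rfl fun i _ => ?_
  rw [mul_right_comm, mul_assoc _ (C j i), Complex.mul_conj, ← Complex.ofReal_mul,
    ← Complex.ofReal_mul, Complex.ofReal_re]
  ring

lemma re_trace_herCFC_mul_sq_sub (f g h : ℝ → ℝ) :
    (herCFC hB f * ((herCFC hA g - herCFC hB h) * (herCFC hA g - herCFC hB h))).trace.re =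
      spectralPairing hA hB (fun b a => f b * (g a - h b) ^ 2) := by
  have hexpand : herCFC hB f * ((herCFC hA g - herCFC hB h) * (herCFC hA g - herCFC hB h)) =
      herCFC hB f * herCFC hA (fun x => g x * g x) - herCFC hB f * herCFC hA g * herCFC hB h -
        herCFC hB (fun x => f x * h x) * herCFC hA g +
          herCFC hB (fun x => f x * (h x * h x)) * herCFC hA (fun _ => 1) := by
    rw [← herCFC_mul hA g g, ← herCFC_mul hB f h, ← herCFC_mul hB f, ← herCFC_mul hB h h,
      herCFC_one, Matrix.mul_one]
    noncomm_ring
  rw [hexpand, trace_add, trace_sub, trace_sub, trace_mul_cycle, herCFC_mul hB h f]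
  simp only [Complex.add_re, Complex.sub_re, re_trace_herCFC_mul_herCFC, spectralPairing_add,
    spectralPairing_sub]
  congr 1; ext b a; ring

lemma re_trace_bregman (S S' : ℝ → ℝ) :
    (herCFC hA S - herCFC hB S - herCFC hB S' * (A - B)).trace.re =
      spectralPairing hA hB (fun b a => S a - S b - S' b * (a - b)) := by
  have hexpand : herCFC hA S - herCFC hB S - herCFC hB S' * (A - B) =
      herCFC hB (fun _ => 1) * herCFC hA S - herCFC hB S * herCFC hA (fun _ => 1) -
        herCFC hB S' * herCFC hA (fun x => x) +
          herCFC hB (fun x => S' x * x) * herCFC hA (fun _ => 1) := by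
    rw [herCFC_one, herCFC_one, herCFC_id, ← herCFC_mul, herCFC_id]
    noncomm_ring
  rw [hexpand, trace_add, trace_sub, trace_sub]
  simp only [Complex.add_re, Complex.sub_re, re_trace_herCFC_mul_herCFC, spectralPairing_add,
    spectralPairing_sub]
  congr 1; ext b a; ring

lemma integral_spectralPairing {φ : ℝ → ℝ → ℝ → ℝ} {c d : ℝ}
    (hφ : ∀ b a, IntervalIntegrable (fun x => φ x b a) volume c d) :
    ∫ x in c..d, spectralPairing hA hB (φ x) =
      spectralPairing hA hB (fun b a => ∫ x in c..d, φ x b a) := by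
  simp only [spectralPairing]
  rw [intervalIntegral.integral_finsetSum fun j _ => ?_]
  · refine Finset.sum_congr rfl fun j _ => ?_
    rw [intervalIntegral.integral_finsetSum fun i _ => (hφ _ _).const_mul _]
    simp only [intervalIntegral.integral_const_mul]
  · simpa only [Finset.sum_fn] using IntervalIntegrable.sum _ fun i _ => (hφ _ _).const_mul _

end Spectral

theorem statement12_general (n : ℕ) (S S' : ℝ → ℝ)
    (hScont : ContinuousOn S (Set.Icc 0 1))
    (hderiv : ∀ x ∈ Set.Ioo (0:ℝ) 1, HasDerivAt S (S' x) x)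
    (hanti : StrictAntiOn S' (Set.Icc 0 1))
    (A B : Matrix (Fin n) (Fin n) ℂ) (hA : A.IsHermitian) (hB : B.IsHermitian)
    (hA0 : A.PosSemidef) (hA1 : ((1 : Matrix (Fin n) (Fin n) ℂ) - A).PosSemidef)
    (hB0 : B.PosSemidef) (hB1 : ((1 : Matrix (Fin n) (Fin n) ℂ) - B).PosSemidef) :
    -((herCFC hA S - herCFC hB S - herCFC hB S' * (A - B)).trace.re) =
      ∫ lam in (0:ℝ)..1,
        ((herCFC hB (fun x => |S' x - S' lam|) *
          ((specProj hA lam - specProj hB lam) *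
            (specProj hA lam - specProj hB lam))).trace).re := by
  have hS' := hanti.antitoneOn
  simp only [specProj, re_trace_herCFC_mul_sq_sub hA hB, re_trace_bregman hA hB]
  rw [integral_spectralPairing hA hB fun b a => intervalIntegrable_abs_sub_mul_sq_ite hS' a b]
  simp only [spectralPairing, ← Finset.sum_neg_distrib, ← mul_neg]
  refine Finset.sum_congr rfl fun j _ => Finset.sum_congr rfl fun i _ => ?_
  rw [integral_abs_sub_mul_sq_ite hScont hderiv hS' (hA.eigenvalues_mem_Icc hA0 hA1 i)
    (hB.eigenvalues_mem_Icc hB0 hB1 j)]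

/-- integral representation of the relative entropy.  For
self-adjoint matrices `0 ≤ A, B ≤ 1` and `S` continuous on `[0,1]`, differentiable
on `(0,1)` with strictly decreasing derivative `S'`,
`H(A,B) = -tr(S(A) - S(B) - S'(B)(A-B))
        = ∫₀¹ tr |S'(B) - S'(λ)| (1(A ≥ λ) - 1(B ≥ λ))² dλ`. -/
theorem statement12 (n : ℕ) (S S' : ℝ → ℝ)
    (hScont : ContinuousOn S (Set.Icc 0 1))
    (hderiv : ∀ x ∈ Set.Ioo (0:ℝ) 1, HasDerivAt S (S' x) x)
    (hanti : StrictAntiOn S' (Set.Icc 0 1))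
    (hSint : IntervalIntegrable S' volume 0 1)
    (A B : Matrix (Fin n) (Fin n) ℂ) (hA : A.IsHermitian) (hB : B.IsHermitian)
    (hA0 : A.PosSemidef) (hA1 : ((1 : Matrix (Fin n) (Fin n) ℂ) - A).PosSemidef)
    (hB0 : B.PosSemidef) (hB1 : ((1 : Matrix (Fin n) (Fin n) ℂ) - B).PosSemidef) :
    -((herCFC hA S - herCFC hB S - herCFC hB S' * (A - B)).trace.re) =
      ∫ lam in (0:ℝ)..1,
        ((herCFC hB (fun x => |S' x - S' lam|) *
          ((specProj hA lam - specProj hB lam) *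
            (specProj hA lam - specProj hB lam))).trace).re :=
  statement12_general n S S' hScont hderiv hanti A B hA hB hA0 hA1 hB0 hB1
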